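/- arXiv:1405.3872 — 6 statements merged into one kernel-verified Lean document; each statement's English description precedes it below -/
import Mathlib

section
/- Let φ : G̃ → G be a surjective homomorphism of finite groups and suppose ((x,y,z),(a,b,c)) is an unmixed Beauville structure on G. Suppose x̃, ỹ, z̃ ∈ G̃ satisfy x̃*ỹ*z̃ = 1, generate G̃, map under φ to x, y, z respectively, and satisfy orderOf x̃ = orderOf x, orderOf ỹ = orderOf y, orderOf z̃ = orderOf z. Suppose further that ã, b̃, c̃ ∈ G̃ generate G̃, satisfy ã*b̃*c̃ = 1, and map under φ to a, b, c respectively. Then ((x̃,ỹ,z̃),(ã,b̃,c̃)) is an unmixed Beauville structure on G̃. -/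
def IsBeauvilleStructure {G : Type*} [Group G] (x y z a b c : G) : Prop :=
  x * y * z = 1 ∧ a * b * c = 1 ∧
  Subgroup.closure {x, y, z} = ⊤ ∧ Subgroup.closure {a, b, c} = ⊤ ∧
  ∀ u ∈ ({x, y, z} : Set G), ∀ v ∈ ({a, b, c} : Set G), ∀ g : G, ∀ i j : ℤ,
    u ^ i = g * v ^ j * g⁻¹ → u ^ i = 1

/-- Triangle group lifting of Beauville structures for finite groups. -/
theorem beauville_lift_of_orders_preserved
    {G' G : Type*} [Group G'] [Group G] [Finite G'] [Finite G]
    (φ : G' →* G) (hφ : Function.Surjective φ)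
    (x y z a b c : G) (hB : IsBeauvilleStructure x y z a b c)
    (x' y' z' : G') (hxyz : x' * y' * z' = 1)
    (hgen : Subgroup.closure ({x', y', z'} : Set G') = ⊤)
    (hφx : φ x' = x) (hφy : φ y' = y) (hφz : φ z' = z)
    (hox : orderOf x' = orderOf x) (hoy : orderOf y' = orderOf y)
    (hoz : orderOf z' = orderOf z)
    (a' b' c' : G') (habc : a' * b' * c' = 1)
    (hgen' : Subgroup.closure ({a', b', c'} : Set G') = ⊤)
    (hφa : φ a' = a) (hφb : φ b' = b) (hφc : φ c' = c) :
    IsBeauvilleStructure x' y' z' a' b' c' := by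
  obtain ⟨-, -, -, -, h5⟩ := hB
  refine ⟨hxyz, habc, hgen, hgen', ?_⟩
  intro u hu v hv g i j huv
  have hu' : orderOf u = orderOf (φ u) ∧ φ u ∈ ({x, y, z} : Set G) := by
    rcases hu with rfl | rfl | rfl <;> simp_all
  have hv' : φ v ∈ ({a, b, c} : Set G) := by
    rcases hv with rfl | rfl | rfl <;> simp_all
  have h1 : (φ u) ^ i = 1 := by
    apply h5 (φ u) hu'.2 (φ v) hv' (φ g) i j
    have := congrArg φ huv
    simpa using this
  have h2 : ((orderOf (φ u) : ℤ)) ∣ i := orderOf_dvd_iff_zpow_eq_one.mpr h1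
  rw [← hu'.1] at h2
  exact orderOf_dvd_iff_zpow_eq_one.mp h2
end

section
/- Let p be a prime, let G̃ and G be finite p-groups, let φ : G̃ → G be a surjective homomorphism, and suppose ((x,y,z),(a,b,c)) is an unmixed Beauville structure on G. Suppose x̃, ỹ, z̃ ∈ G̃ satisfy x̃*ỹ*z̃ = 1, generate G̃, map under φ to x, y, z respectively, and satisfy orderOf x̃ = orderOf x, orderOf ỹ = orderOf y, orderOf z̃ = orderOf z. Let ã, b̃ ∈ G̃ be arbitrary elements with φ(ã) = a and φ(b̃) = b, and set c̃ = (ã*b̃)⁻¹. Then ((x̃,ỹ,z̃),(ã,b̃,c̃)) is an unmixed Beauville structure on G̃. -/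
/-!
The conjugacy condition lifts along `φ` because `φ` preserves the orders of `x'`, `y'`, `z'`.
For generation by `a'`, `b'`, `c'` it suffices that `ker φ ≤ Φ(G')`, the Frattini subgroup.
As `G'` is generated by `x'` and `y'`, the quotient `G' ⧸ Φ(G')` is abelian of exponent `p`
on two generators, so `[G' : Φ(G')] ≤ p²`. On the other hand `[G : Φ(G)] ≥ p²` when `G ≠ 1`:
if `Φ(G)` had prime index, each triple would contain an element outside `Φ(G)`, hence a generator
of `G`, and the two triples would share a nontrivial power. Since `Φ(G') ≤ φ⁻¹(Φ(G))`, comparing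
indices forces equality, and `ker φ ≤ φ⁻¹(Φ(G)) = Φ(G')`.
-/
open Subgroup
open scoped commutatorElement

section

variable {G : Type*} [Group G]

lemma mem_frattini_iff {g : G} : g ∈ frattini G ↔ ∀ M : Subgroup G, IsCoatom M → g ∈ M := by
  simp only [frattini, Order.radical, mem_iInf, Set.mem_ofPred_eq]

lemma frattini_ne_top [Finite G] [Nontrivial G] : frattini G ≠ ⊤ := by
  obtain ⟨M, hM, -⟩ := (eq_top_or_exists_le_coatom (⊥ : Subgroup G)).resolve_left bot_ne_top
  exact ne_top_of_le_ne_top hM.1 (frattini_le_coatom hM)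

lemma sup_eq_top_of_zpowers_mk_eq_top {N : Subgroup G} [N.Normal] {g : G}
    (h : zpowers (g : G ⧸ N) = ⊤) : zpowers g ⊔ N = ⊤ := by
  rw [← QuotientGroup.ker_mk' N, ← comap_map_eq, MonoidHom.map_zpowers, QuotientGroup.mk'_apply,
    h, comap_top]

lemma closure_pair_eq_top_of_mul_mul_eq_one {x y z : G} (hxyz : x * y * z = 1)
    (h : closure {x, y, z} = ⊤) : closure {x, y} = ⊤ := by
  rw [eq_top_iff, ← h, closure_le]
  rintro w (rfl | rfl | rfl)
  · exact subset_closure (by simp)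
  · exact subset_closure (by simp)
  · rw [eq_inv_of_mul_eq_one_right hxyz]
    exact inv_mem (mul_mem (subset_closure (by simp)) (subset_closure (by simp)))

lemma card_le_orderOf_mul_orderOf {u v : G} (huv : Commute u v)
    (h : closure {u, v} = ⊤) : Nat.card G ≤ orderOf u * orderOf v := by
  cases finite_or_infinite G
  · let f := (zpowers u).subtype.noncommCoprod (zpowers v).subtype
      fun ⟨_, i, hi⟩ ⟨_, j, hj⟩ => hi ▸ hj ▸ huv.zpow_zpow i j
    have hf : Function.Surjective f := by
      rw [← MonoidHom.range_eq_top, eq_top_iff, ← h, closure_le]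
      rintro w (rfl | rfl)
      · exact ⟨(⟨w, mem_zpowers w⟩, 1), by simp [f]⟩
      · exact ⟨(1, ⟨w, mem_zpowers w⟩), by simp [f]⟩
    simpa [Nat.card_prod, Nat.card_zpowers] using Nat.card_le_card_of_surjective f hf
  · simp

lemma MonoidHom.eq_top_of_map_eq_top_of_ker_le_frattini {G' : Type*} [Group G'] [Finite G']
    {φ : G' →* G} (hφ : φ.ker ≤ frattini G') {H : Subgroup G'} (hH : H.map φ = ⊤) : H = ⊤ := by
  refine frattini_nongenerating (eq_top_iff.mpr ?_)
  rw [← comap_top φ, ← hH, comap_map_eq]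
  exact sup_le_sup_left hφ H

lemma zpowers_eq_top_of_notMem_frattini [Finite G] (hΦ : (frattini G).index.Prime) {g : G}
    (hg : g ∉ frattini G) : zpowers g = ⊤ := by
  have : Fact (frattini G).index.Prime := ⟨hΦ⟩
  refine frattini_nongenerating (sup_eq_top_of_zpowers_mk_eq_top ?_)
  exact zpowers_eq_top_of_prime_card (index_eq_card _).symm (by rwa [Ne, QuotientGroup.eq_one_iff])

namespace IsPGroup

variable {p : ℕ} [hp : Fact p.Prime] [Finite G] {M : Subgroup G}

lemma normal_of_isCoatom (hG : IsPGroup p G) (hM : IsCoatom M) : M.Normal :=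
  have := hG.isNilpotent
  NormalizerCondition.normal_of_coatom M Group.normalizerCondition_of_isNilpotent hM

lemma index_eq_of_isCoatom (hG : IsPGroup p G) (hM : IsCoatom M) : M.index = p := by
  have := hG.normal_of_isCoatom hM
  have hQ : p ∣ Nat.card (G ⧸ M) := by
    refine (hG.to_quotient M).card_eq_or_dvd.resolve_left fun h => hM.1 ?_
    rwa [← index_eq_card, index_eq_one] at h
  obtain ⟨q, hq⟩ := exists_prime_orderOf_dvd_card' p hQ
  obtain ⟨g, rfl⟩ := QuotientGroup.mk_surjective q
  have hlt : M < (zpowers (g : G ⧸ M)).comap (QuotientGroup.mk' M) := by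
    refine lt_of_le_of_ne ?_ fun h => ?_
    · simpa using (QuotientGroup.mk' M).ker_le_comap (zpowers (g : G ⧸ M))
    · have hg : g ∈ M := h ▸ mem_zpowers (g : G ⧸ M)
      rw [← QuotientGroup.eq_one_iff] at hg
      simp [hg, hp.out.ne_one.symm] at hq
  have htop : zpowers (g : G ⧸ M) = ⊤ := (comap_injective (QuotientGroup.mk'_surjective M)).eq_iff.mp
    ((hM.2 _ hlt).trans (comap_top _).symm)
  rw [index_eq_card, ← card_top, ← htop, Nat.card_zpowers, hq]

lemma pow_mem_frattini (hG : IsPGroup p G) (g : G) : g ^ p ∈ frattini G :=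
  mem_frattini_iff.mpr fun M hM =>
    have := hG.normal_of_isCoatom hM
    hG.index_eq_of_isCoatom hM ▸ M.pow_index_mem g

lemma commutatorElement_mem_frattini (hG : IsPGroup p G) (g h : G) : ⁅g, h⁆ ∈ frattini G := by
  refine mem_frattini_iff.mpr fun M hM => ?_
  have := hG.normal_of_isCoatom hM
  have : IsCyclic (G ⧸ M) := isCyclic_of_prime_card (hG.index_eq_of_isCoatom hM)
  rw [← QuotientGroup.eq_one_iff, ← QuotientGroup.mk'_apply, map_commutatorElement,
    commutatorElement_eq_one_iff_commute]
  exact mul_comm' _ _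

lemma index_frattini_le_sq (hG : IsPGroup p G) {x y : G} (h : closure {x, y} = ⊤) :
    (frattini G).index ≤ p ^ 2 := by
  set π := QuotientGroup.mk' (frattini G)
  have horder (g : G) : orderOf (π g) ≤ p :=
    orderOf_le_of_pow_eq_one hp.out.pos <| by
      rw [← map_pow, QuotientGroup.mk'_apply, QuotientGroup.eq_one_iff]
      exact hG.pow_mem_frattini g
  have hcomm : Commute (π x) (π y) := by
    rw [← commutatorElement_eq_one_iff_commute, ← map_commutatorElement, QuotientGroup.mk'_apply,
      QuotientGroup.eq_one_iff]
    exact hG.commutatorElement_mem_frattini x y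
  have hgen : closure {π x, π y} = ⊤ := by
    rw [← Set.image_pair, ← MonoidHom.map_closure, h, ← MonoidHom.range_eq_map,
      MonoidHom.range_eq_top]
    exact QuotientGroup.mk'_surjective _
  calc (frattini G).index = Nat.card (G ⧸ frattini G) := index_eq_card _
    _ ≤ orderOf (π x) * orderOf (π y) := card_le_orderOf_mul_orderOf hcomm hgen
    _ ≤ p ^ 2 := sq p ▸ Nat.mul_le_mul (horder x) (horder y)

end IsPGroup

namespace IsBeauvilleStructure

variable {x y z a b c : G}

lemma not_prime_index_frattini [Finite G] (hB : IsBeauvilleStructure x y z a b c) :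
    ¬ (frattini G).index.Prime := by
  intro hΦ
  obtain ⟨-, -, hxyz, habc, hB⟩ := hB
  have exists_notMem {S : Set G} (hS : closure S = ⊤) : ∃ s ∈ S, s ∉ frattini G := by
    by_contra! hle
    exact hΦ.ne_one (index_eq_one.mpr (eq_top_iff.mpr (hS ▸ (closure_le _).mpr hle)))
  obtain ⟨u, hu, huΦ⟩ := exists_notMem hxyz
  obtain ⟨v, hv, hvΦ⟩ := exists_notMem habc
  obtain ⟨j, hj⟩ := mem_zpowers_iff.mp (zpowers_eq_top_of_notMem_frattini hΦ hvΦ ▸ mem_top u)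
  have hu1 : u = 1 := by simpa using hB u hu v hv 1 1 j (by simp [hj])
  exact huΦ (hu1 ▸ one_mem _)

lemma sq_le_index_frattini {p : ℕ} [hp : Fact p.Prime] [Finite G] [Nontrivial G] (hG : IsPGroup p G)
    (hB : IsBeauvilleStructure x y z a b c) : p ^ 2 ≤ (frattini G).index := by
  obtain ⟨k, hk⟩ := hG.index (frattini G)
  have hk0 : k ≠ 0 := by
    rintro rfl
    exact frattini_ne_top (index_eq_one.mp (hk.trans (pow_zero p)))
  have hk1 : k ≠ 1 := by
    rintro rfl
    exact hB.not_prime_index_frattini (hk.trans (pow_one p) ▸ hp.out)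
  exact hk ▸ Nat.pow_le_pow_right hp.out.pos (by omega)

lemma of_map {G' : Type*} [Group G'] (φ : G' →* G) {x' y' z' a' b' c' : G'}
    (hB : IsBeauvilleStructure (φ x') (φ y') (φ z') (φ a') (φ b') (φ c'))
    (hxyz : x' * y' * z' = 1) (habc : a' * b' * c' = 1)
    (hgen : closure {x', y', z'} = ⊤) (hgen' : closure {a', b', c'} = ⊤)
    (hx : orderOf (φ x') = orderOf x') (hy : orderOf (φ y') = orderOf y')
    (hz : orderOf (φ z') = orderOf z') :
    IsBeauvilleStructure x' y' z' a' b' c' := by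
  refine ⟨hxyz, habc, hgen, hgen', fun u hu v hv g i j h => ?_⟩
  have hφu : φ u ∈ ({φ x', φ y', φ z'} : Set G) ∧ orderOf (φ u) = orderOf u := by
    rcases hu with rfl | rfl | rfl <;> simp [*]
  have hφv : φ v ∈ ({φ a', φ b', φ c'} : Set G) := by
    rcases hv with rfl | rfl | rfl <;> simp
  have h1 := hB.2.2.2.2 _ hφu.1 _ hφv (φ g) i j (by simpa using congrArg φ h)
  rwa [← orderOf_dvd_iff_zpow_eq_one, hφu.2, orderOf_dvd_iff_zpow_eq_one] at h1

end IsBeauvilleStructure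

lemma IsPGroup.ker_le_frattini {p : ℕ} [Fact p.Prime] {G' : Type*} [Group G'] [Finite G']
    (hG' : IsPGroup p G') {x y : G'} (hxy : closure {x, y} = ⊤) {φ : G' →* G}
    (hφ : Function.Surjective φ) (hG : p ^ 2 ≤ (frattini G).index) : φ.ker ≤ frattini G' := by
  obtain heq | hlt := (frattini_le_comap_frattini_of_surjective hφ).eq_or_lt
  · exact heq ▸ φ.ker_le_comap _
  · have hindex := index_strictAnti hlt
    rw [index_comap_of_surjective _ hφ] at hindex
    have := hG'.index_frattini_le_sq hxy
    omega

end

/-- Triangle group lifting of Beauville structures for finite `p`-groups: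
the second half may be lifted arbitrarily. -/
theorem beauville_lift_pGroup
    {p : ℕ} (hp : p.Prime)
    {G' G : Type*} [Group G'] [Group G] [Finite G'] [Finite G]
    (hG' : IsPGroup p G') (hG : IsPGroup p G)
    (φ : G' →* G) (hφ : Function.Surjective φ)
    (x y z a b c : G) (hB : IsBeauvilleStructure x y z a b c)
    (x' y' z' : G') (hxyz : x' * y' * z' = 1)
    (hgen : Subgroup.closure ({x', y', z'} : Set G') = ⊤)
    (hφx : φ x' = x) (hφy : φ y' = y) (hφz : φ z' = z)
    (hox : orderOf x' = orderOf x) (hoy : orderOf y' = orderOf y)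
    (hoz : orderOf z' = orderOf z)
    (a' b' : G') (hφa : φ a' = a) (hφb : φ b' = b) :
    IsBeauvilleStructure x' y' z' a' b' (a' * b')⁻¹ := by
  have := Fact.mk hp
  subst hφx hφy hφz hφa hφb
  obtain rfl : c = φ (a' * b')⁻¹ := by
    rw [map_inv, map_mul]
    exact eq_inv_of_mul_eq_one_right hB.2.1
  have hker : φ.ker ≤ frattini G' := by
    rcases subsingleton_or_nontrivial G with _ | _
    · have eq_one (w : G') (hw : orderOf w = orderOf (φ w)) : w = 1 := by
        rw [← orderOf_eq_one_iff, hw, Subsingleton.elim (φ w) 1, orderOf_one]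
      rw [eq_one x' hox, eq_one y' hoy, eq_one z' hoz] at hgen
      simp only [Set.insert_eq_of_mem, Set.mem_singleton_iff, closure_singleton_one] at hgen
      exact fun w _ => mem_bot.mp (hgen ▸ mem_top w) ▸ one_mem _
    · exact hG'.ker_le_frattini (closure_pair_eq_top_of_mul_mul_eq_one hxyz hgen) hφ
        (hB.sq_le_index_frattini hG)
  refine hB.of_map φ hxyz (mul_inv_cancel _) hgen ?_ hox.symm hoy.symm hoz.symm
  refine φ.eq_top_of_map_eq_top_of_ker_le_frattini hker ?_
  rw [MonoidHom.map_closure, Set.image_insert_eq, Set.image_pair]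
  exact hB.2.2.2.1
end

section
/- A nontrivial finite cyclic group admits no unmixed Beauville structure. -/
/-- A nontrivial finite cyclic group admits no unmixed Beauville structure. -/
theorem no_beauville_of_isCyclic
    {G : Type*} [Group G] [Finite G] [Nontrivial G] (hG : IsCyclic G) :
    ¬ ∃ x y z a b c : G, IsBeauvilleStructure x y z a b c := by
  letI : CommGroup G := hG.commGroup
  rintro ⟨x, y, z, a, b, c, hxyz, habc, hclx, hcla, hcond⟩
  set n := Nat.card G with hn
  have hn1 : 1 < n := Finite.one_lt_card
  obtain ⟨p, hp, hpd⟩ := Nat.exists_prime_and_dvd hn1.ne'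
  set m := n / p with hm
  have hmp : m * p = n := Nat.div_mul_cancel hpd
  have hm0 : 0 < m := by
    rcases Nat.eq_zero_or_pos m with h | h
    · simp [h] at hmp; omega
    · exact h
  have hmn : m < n := by
    have := hp.one_lt
    nlinarith [hmp]
  -- generating sets contain an element with u^m ≠ 1
  have key : ∀ s : Set G, Subgroup.closure s = ⊤ → ∃ u ∈ s, u ^ m ≠ 1 := by
    intro s hs
    by_contra h
    push_neg at h
    have hle : Subgroup.closure s ≤ (powMonoidHom m : G →* G).ker := by
      apply Subgroup.closure_le _ |>.mpr
      intro g hg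
      simp [MonoidHom.mem_ker, powMonoidHom_apply, h g hg]
    rw [hs] at hle
    obtain ⟨g0, hg0⟩ := hG.exists_ofOrder_eq_natCard
    have hmem : g0 ∈ (powMonoidHom m : G →* G).ker := hle (Subgroup.mem_top g0)
    have hpow : g0 ^ m = 1 := by
      simpa [MonoidHom.mem_ker, powMonoidHom_apply] using hmem
    have hdvd : n ∣ m := by
      have := orderOf_dvd_of_pow_eq_one hpow
      rwa [hg0] at this
    exact absurd (Nat.le_of_dvd hm0 hdvd) (not_le.mpr hmn)
  obtain ⟨u, hu, hum⟩ := key _ hclx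
  obtain ⟨v, hv, hvm⟩ := key _ hcla
  have hup : (u ^ m) ^ p = 1 := by rw [← pow_mul, hmp]; exact pow_card_eq_one'
  have hvp : (v ^ m) ^ p = 1 := by rw [← pow_mul, hmp]; exact pow_card_eq_one'
  have hou : orderOf (u ^ m) = p := ((hp.eq_one_or_self_of_dvd _
    (orderOf_dvd_of_pow_eq_one hup)).resolve_left (by
      simpa [orderOf_eq_one_iff] using hum))
  have hov : orderOf (v ^ m) = p := ((hp.eq_one_or_self_of_dvd _
    (orderOf_dvd_of_pow_eq_one hvp)).resolve_left (by
      simpa [orderOf_eq_one_iff] using hvm))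
  -- the subgroup of p-th roots of 1
  classical
  have := Fintype.ofFinite G
  set Kp : Subgroup G := (powMonoidHom p : G →* G).ker with hKp
  have hKpmem : ∀ g : G, g ∈ Kp ↔ g ^ p = 1 := by
    intro g; simp [hKp, MonoidHom.mem_ker, powMonoidHom_apply]
  have hcardKp : Nat.card Kp ≤ p := by
    have h1 : Nat.card Kp = (Finset.univ.filter fun g : G => g ^ p = 1).card := by
      rw [Nat.card_eq_fintype_card]
      rw [← Fintype.card_subtype]
      apply Fintype.card_congr
      exact Equiv.subtypeEquivRight (fun g => hKpmem g)
    rw [h1]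
    exact IsCyclic.card_pow_eq_one_le hp.pos
  have hzle : Subgroup.zpowers (v ^ m) ≤ Kp :=
    Subgroup.zpowers_le.mpr ((hKpmem _).mpr hvp)
  have hcardz : Nat.card (Subgroup.zpowers (v ^ m)) = p := by
    rw [Nat.card_zpowers, hov]
  have heq : Subgroup.zpowers (v ^ m) = Kp := by
    apply SetLike.ext'
    apply Set.eq_of_subset_of_ncard_le (fun g hg => hzle hg)
    · rw [← Nat.card_coe_set_eq, ← Nat.card_coe_set_eq]
      simp only [SetLike.coe_sort_coe]
      rw [hcardz]; exact hcardKp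
  have humem : u ^ m ∈ Subgroup.zpowers (v ^ m) := by
    rw [heq]; exact (hKpmem _).mpr hup
  obtain ⟨k, hk⟩ := Subgroup.mem_zpowers_iff.mp humem
  have hfinal : u ^ (m : ℤ) = 1 := by
    apply hcond u hu v hv 1 (m : ℤ) ((m : ℤ) * k)
    rw [one_mul, inv_one, mul_one, zpow_mul, zpow_natCast, zpow_natCast, hk]
  exact hum (by rwa [zpow_natCast] at hfinal)
end

section
/- Let p be a prime and G a nontrivial finite p-group that admits an unmixed Beauville structure. Then the quotient of G by its Frattini subgroup has cardinality p^2 (equivalently, G/Φ(G) is a 2-dimensional 𝔽_p-vector space). -/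
open Subgroup QuotientGroup

lemma aux_mem_frattini {G : Type*} [Group G] {g : G}
    (h : ∀ M : Subgroup G, IsCoatom M → g ∈ M) : g ∈ frattini G := by
  simp only [frattini, Order.radical, Subgroup.mem_iInf, Set.mem_setOf_eq]
  exact fun M hM => h M hM

lemma aux_coatom {p : ℕ} (hp : p.Prime) {G : Type*} [Group G] [Finite G]
    (hG : IsPGroup p G) {M : Subgroup G} (hM : IsCoatom M) :
    (∀ g : G, g ^ p ∈ M) ∧ (∀ g h : G, (g * h)⁻¹ * (h * g) ∈ M) := by
  haveI := Fact.mk hp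
  haveI : Group.IsNilpotent G := hG.isNilpotent
  haveI : M.Normal :=
    Subgroup.NormalizerCondition.normal_of_coatom M (normalizerCondition_of_isNilpotent (G := G)) hM
  set Q := G ⧸ M
  have hQ : IsPGroup p Q := hG.to_quotient M
  have hsurj : Function.Surjective (QuotientGroup.mk' M) := QuotientGroup.mk'_surjective M
  -- the subgroup lattice of Q is trivial
  have triv : ∀ H : Subgroup Q, H = ⊥ ∨ H = ⊤ := by
    intro H
    have h1 : M ≤ H.comap (QuotientGroup.mk' M) := by
      intro m hm
      simp only [Subgroup.mem_comap]
      have : (QuotientGroup.mk' M) m = 1 := (QuotientGroup.eq_one_iff m).mpr hm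
      rw [this]; exact H.one_mem
    rcases eq_or_lt_of_le h1 with h2 | h2
    · left
      have := Subgroup.map_comap_eq_self_of_surjective hsurj H
      rw [← this, ← h2, Subgroup.map_eq_bot_iff, QuotientGroup.ker_mk']
    · right
      have h3 := hM.2 _ h2
      have := Subgroup.map_comap_eq_self_of_surjective hsurj H
      rw [← this, h3]
      exact Subgroup.map_top_of_surjective _ hsurj
  -- exponent p
  have hpow : ∀ q : Q, q ^ p = 1 := by
    intro q
    obtain ⟨k, hk⟩ := IsPGroup.iff_orderOf.mp hQ q
    cases k with
    | zero =>
      have : q = 1 := orderOf_eq_one_iff.mp (by simpa using hk)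
      simp [this]
    | succ k =>
      rcases triv (zpowers (q ^ p)) with h | h
      · exact Subgroup.zpowers_eq_bot.mp h
      · exfalso
        have hdvd : orderOf q ∣ Nat.card Q := orderOf_dvd_natCard q
        have hcard : Nat.card Q = orderOf (q ^ p) := by
          rw [← Nat.card_zpowers, h, Subgroup.card_top]
        have hop : orderOf (q ^ p) = p ^ k := by
          rw [orderOf_pow' q hp.pos.ne', hk]
          have : Nat.gcd (p ^ (k + 1)) p = p :=
            Nat.gcd_eq_right (dvd_pow_self p (Nat.succ_ne_zero k))
          rw [this, pow_succ, Nat.mul_div_cancel _ hp.pos]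
        have : p ^ (k + 1) ∣ p ^ k := by
          rw [← hk, ← hop, ← hcard]; exact hdvd.trans (by rw [hcard])
        have := (Nat.pow_dvd_pow_iff_le_right hp.one_lt).mp this
        omega
  -- Q is nontrivial
  have hnt : Nontrivial Q := by
    obtain ⟨g, hg⟩ : ∃ g, g ∉ M := by
      by_contra h; push_neg at h
      exact hM.1 ((Subgroup.eq_top_iff' M).mpr h)
    exact ⟨⟨(g : Q), 1, fun h => hg ((QuotientGroup.eq_one_iff g).mp h)⟩⟩
  -- Q is cyclic hence commutative
  haveI hc : IsCyclic Q := by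
    obtain ⟨q, hq⟩ := exists_ne (1 : Q)
    rcases triv (zpowers q) with h | h
    · exact absurd (Subgroup.zpowers_eq_bot.mp h) hq
    · exact ⟨⟨q, fun x => by rw [show (∃ n : ℤ, q ^ n = x) ↔ x ∈ zpowers q from Iff.rfl, h]; exact Subgroup.mem_top x⟩⟩
  have hcomm : ∀ a b : Q, a * b = b * a := fun a b =>
    (IsCyclic.commGroup (α := Q)).mul_comm a b
  constructor
  · intro g
    have : ((g : Q)) ^ p = 1 := hpow _
    rw [← QuotientGroup.mk_pow] at this
    exact (QuotientGroup.eq_one_iff _).mp this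
  · intro g h
    have : ((g * h : G) : Q) = ((h * g : G) : Q) := by
      rw [QuotientGroup.mk_mul, QuotientGroup.mk_mul, hcomm]
    exact (QuotientGroup.eq).mp this

/-- A nontrivial finite `p`-group with a Beauville structure has Frattini
quotient of cardinality `p ^ 2`. -/
theorem card_frattini_quotient_of_beauville
    {p : ℕ} (hp : p.Prime)
    {G : Type*} [Group G] [Finite G] [Nontrivial G] (hG : IsPGroup p G)
    (x y z a b c : G) (hB : IsBeauvilleStructure x y z a b c) :
    Nat.card (G ⧸ frattini G) = p ^ 2 := by
  haveI := Fact.mk hp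
  obtain ⟨hxyz, habc, hclX, hclA, hcond⟩ := hB
  set F := frattini G with hF
  set Q := G ⧸ F
  have hQ : IsPGroup p Q := hG.to_quotient F
  have hsurj : Function.Surjective (QuotientGroup.mk' F) := QuotientGroup.mk'_surjective F
  -- exponent p and commutativity of Q
  have hpow : ∀ q : Q, q ^ p = 1 := by
    intro q
    obtain ⟨g, rfl⟩ := hsurj q
    have : g ^ p ∈ F := aux_mem_frattini (fun M hM => (aux_coatom hp hG hM).1 g)
    rw [← map_pow]
    exact (QuotientGroup.eq_one_iff _).mpr this
  have hcomm : ∀ q r : Q, q * r = r * q := by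
    intro q r
    obtain ⟨g, rfl⟩ := hsurj q
    obtain ⟨h, rfl⟩ := hsurj r
    have : (g * h)⁻¹ * (h * g) ∈ F :=
      aux_mem_frattini (fun M hM => (aux_coatom hp hG hM).2 g h)
    have := (QuotientGroup.eq (s := F)).mpr this
    simpa using this
  -- F is proper, so Q is nontrivial
  obtain ⟨M, hM⟩ : ∃ M : Subgroup G, IsCoatom M := by
    rcases (Finite.to_isCoatomic (α := Subgroup G)).eq_top_or_exists_le_coatom ⊥ with h | ⟨M, hM, _⟩
    · exact absurd h bot_ne_top
    · exact ⟨M, hM⟩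
  have hFproper : F ≠ ⊤ := fun h => hM.1 (top_le_iff.mp (h ▸ frattini_le_coatom hM))
  haveI hntQ : Nontrivial Q := by
    obtain ⟨g, hg⟩ : ∃ g, g ∉ F := by
      by_contra h; push_neg at h
      exact hFproper ((Subgroup.eq_top_iff' F).mpr h)
    exact ⟨⟨(g : Q), 1, fun h => hg ((QuotientGroup.eq_one_iff g).mp h)⟩⟩
  -- cardinality is a power of p
  obtain ⟨n, hn⟩ := IsPGroup.iff_card.mp hQ
  -- Q is generated by images of x and y
  have hclxy : Subgroup.closure ({x, y} : Set G) = ⊤ := by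
    rw [eq_top_iff, ← hclX, Subgroup.closure_le]
    intro w hw
    rcases hw with rfl | rfl | rfl
    · exact Subgroup.subset_closure (by simp)
    · exact Subgroup.subset_closure (by simp)
    · have hz : (x * y)⁻¹ = w := inv_eq_of_mul_eq_one_right hxyz
      rw [← hz]
      exact Subgroup.inv_mem _ (Subgroup.mul_mem _
        (Subgroup.subset_closure (by simp)) (Subgroup.subset_closure (by simp)))
  have hclQ : Subgroup.closure ({(x : Q), (y : Q)} : Set Q) = ⊤ := by
    have := Subgroup.map_top_of_surjective _ hsurj
    rw [← this, ← hclxy, MonoidHom.map_closure]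
    congr 1
    simp [Set.image_insert_eq]
  -- card bound: surjection from ZMod p × ZMod p
  have hkey : ∀ (u : Q) (m : ℤ), u ^ p = 1 → u ^ m = u ^ (((m : ZMod p)).val) := by
    intro u m hu
    have h1 : u ^ (p : ℤ) = 1 := by rw [zpow_natCast, hu]
    set r : ℕ := ((m : ZMod p)).val with hr
    have : ((m - (r : ℤ) : ℤ) : ZMod p) = 0 := by
      push_cast
      simp [hr, ZMod.natCast_val, ZMod.cast_id]
    have hdvd : (p : ℤ) ∣ m - r := (ZMod.intCast_zmod_eq_zero_iff_dvd _ _).mp this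
    obtain ⟨k, hk⟩ := hdvd
    have : m = r + p * k := by linarith
    have h2 : (u ^ k) ^ (p : ℤ) = 1 := by
      rw [← zpow_mul, mul_comm k (p : ℤ), zpow_mul, zpow_natCast, hu, one_zpow]
    rw [this, zpow_add, zpow_natCast, mul_comm (p : ℤ) k, zpow_mul, h2, mul_one]
  have hcard_le : Nat.card Q ≤ p ^ 2 := by
    haveI : NeZero p := ⟨hp.pos.ne'⟩
    have hsurjf : Function.Surjective
        (fun ij : ZMod p × ZMod p => ((x : Q)) ^ (ij.1.val) * ((y : Q)) ^ (ij.2.val)) := by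
      intro q
      have hq : q ∈ Subgroup.closure ({(x : Q), (y : Q)} : Set Q) := by
        rw [hclQ]; exact Subgroup.mem_top q
      rw [show ({(x : Q), (y : Q)} : Set Q) = {(x : Q)} ∪ {(y : Q)} from Set.insert_eq _ _,
        Subgroup.closure_union, ← Subgroup.zpowers_eq_closure, ← Subgroup.zpowers_eq_closure]
        at hq
      letI : CommGroup Q := { (inferInstance : Group Q) with mul_comm := hcomm }
      rw [Subgroup.mem_sup] at hq
      obtain ⟨u, hu, v, hv, huv⟩ := hq
      obtain ⟨m, rfl⟩ := hu
      obtain ⟨k, rfl⟩ := hv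
      refine ⟨((m : ZMod p), (k : ZMod p)), ?_⟩
      simp only
      rw [← hkey _ m (hpow _), ← hkey _ k (hpow _)]
      exact huv
    calc Nat.card Q ≤ Nat.card (ZMod p × ZMod p) := Nat.card_le_card_of_surjective _ hsurjf
      _ = p ^ 2 := by rw [Nat.card_prod, Nat.card_zmod, ← sq]
  -- n ≤ 2
  have hn2 : n ≤ 2 := by
    rw [hn] at hcard_le
    exact (Nat.pow_le_pow_iff_right hp.one_lt).mp hcard_le
  -- n ≠ 0
  have hn0 : n ≠ 0 := by
    intro h
    rw [h, pow_zero] at hn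
    have : 1 < Nat.card Q := Finite.one_lt_card
    omega
  -- n ≠ 1
  have hn1 : n ≠ 1 := by
    intro h
    rw [h, pow_one] at hn
    -- some generator among x,y,z maps to a nontrivial element of Q
    have gen_of_not_mem : ∀ u : G, u ∉ F → Subgroup.zpowers u = ⊤ := by
      intro u hu
      have h1 : ((u : Q)) ≠ 1 := fun h => hu ((QuotientGroup.eq_one_iff u).mp h)
      have h2 : Subgroup.zpowers ((u : Q)) = ⊤ := by
        apply Subgroup.eq_top_of_card_eq
        rw [Nat.card_zpowers, hn]
        have : orderOf ((u : Q)) ∣ p := orderOf_dvd_of_pow_eq_one (hpow _)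
        rcases (Nat.dvd_prime hp).mp this with h | h
        · exact absurd (orderOf_eq_one_iff.mp h) h1
        · exact h
      have h3 : Subgroup.zpowers u ⊔ F = ⊤ := by
        rw [eq_top_iff]
        intro g _
        have : ((g : Q)) ∈ Subgroup.zpowers ((u : Q)) := h2 ▸ Subgroup.mem_top _
        obtain ⟨k, hk⟩ := this
        have hk' : ((u ^ k : G) : Q) = (g : Q) := by
          rw [← hk]; simp
        have hmem : (u ^ k)⁻¹ * g ∈ F := (QuotientGroup.eq (s := F)).mp hk'
        have : g = u ^ k * ((u ^ k)⁻¹ * g) := by group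
        rw [this]
        exact Subgroup.mul_mem _
          (Subgroup.mem_sup_left (Subgroup.mem_zpowers_iff.mpr ⟨k, rfl⟩))
          (Subgroup.mem_sup_right hmem)
      exact frattini_nongenerating h3
    have exists_gen : ∀ (s t w : G), Subgroup.closure ({s, t, w} : Set G) = ⊤ →
        ∃ u ∈ ({s, t, w} : Set G), Subgroup.zpowers u = ⊤ := by
      intro s t w hcl
      by_contra hcon
      push_neg at hcon
      have hmem : ∀ u ∈ ({s, t, w} : Set G), u ∈ F := by
        intro u hu
        by_contra hnmem
        exact hcon u hu (gen_of_not_mem u hnmem)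
      have : Subgroup.closure ({s, t, w} : Set G) ≤ F := Subgroup.closure_le F |>.mpr hmem
      rw [hcl] at this
      exact hFproper (top_le_iff.mp this)
    obtain ⟨u, hu, hugen⟩ := exists_gen x y z hclX
    obtain ⟨v, hv, hvgen⟩ := exists_gen a b c hclA
    have : u ∈ Subgroup.zpowers v := hvgen ▸ Subgroup.mem_top u
    obtain ⟨j, hj⟩ := this
    have hu1 : u ^ (1 : ℤ) = 1 := by
      apply hcond u hu v hv 1 1 j
      simp [← hj]
    rw [zpow_one] at hu1
    rw [hu1, Subgroup.zpowers_eq_bot.mpr rfl] at hugen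
    exact bot_ne_top hugen
  rw [hn]
  congr 1
  omega
end

section
/- Let p be a prime and let A be an element of GL_p(𝔽_p) (Matrix.GeneralLinearGroup (Fin p) (ZMod p)) whose order is a power of p, i.e., orderOf A = p^k for some natural number k. Then A^p = 1. -/
/-!
Since `𝔽_p` has characteristic `p`, `(A - 1) ^ p ^ k = A ^ p ^ k - 1 = 0`, so `A - 1` is a nilpotent
`p × p` matrix. Its characteristic polynomial is then `X ^ p`, and Cayley–Hamilton gives
`(A - 1) ^ p = 0`, i.e. `A ^ p - 1 = 0`.
-/

open Polynomial in
theorem Matrix.pow_card_eq_zero_of_isNilpotent {n R : Type*} [Fintype n] [DecidableEq n]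
    [CommRing R] [IsDomain R] {M : Matrix n n R} (hM : IsNilpotent M) :
    M ^ Fintype.card n = 0 := by
  have hcharpoly : M.charpoly = X ^ Fintype.card n :=
    sub_eq_zero.mp (isNilpotent_charpoly_sub_pow_of_isNilpotent hM).eq_zero
  simpa only [hcharpoly, map_pow, aeval_X] using M.aeval_self_charpoly

theorem Matrix.pow_char_eq_one_of_pow_char_pow_eq_one {n R : Type*} [Fintype n] [DecidableEq n]
    [CommRing R] [IsDomain R] {p : ℕ} [Fact p.Prime] [CharP R p] {M : Matrix n n R} {k : ℕ}
    (hcard : Fintype.card n ≤ p) (hM : M ^ p ^ k = 1) : M ^ p = 1 := by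
  -- `Matrix.charP` needs `Nonempty n`; over an empty index the matrix ring is trivial.
  cases isEmpty_or_nonempty n
  · exact Subsingleton.elim _ _
  have hcomm : Commute M 1 := Commute.one_right M
  have hnil : IsNilpotent (M - 1) :=
    ⟨p ^ k, by rw [sub_pow_char_pow_of_commute p k hcomm, hM, one_pow, sub_self]⟩
  have hp : (M - 1) ^ p = 0 := pow_eq_zero_of_le hcard (pow_card_eq_zero_of_isNilpotent hnil)
  rwa [sub_pow_char_of_commute p hcomm, one_pow, sub_eq_zero] at hp

/-- An element of `GL_p(𝔽_p)` of `p`-power order satisfies `A ^ p = 1`. -/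
theorem pow_p_eq_one_of_orderOf_pPow
    {p : ℕ} (hp : p.Prime)
    (A : Matrix.GeneralLinearGroup (Fin p) (ZMod p))
    (k : ℕ) (hA : orderOf A = p ^ k) :
    A ^ p = 1 := by
  have : Fact p.Prime := ⟨hp⟩
  have hApk : (A : Matrix (Fin p) (Fin p) (ZMod p)) ^ p ^ k = 1 := by
    rw [← Units.val_pow_eq_pow_val, ← hA, pow_orderOf_eq_one, Units.val_one]
  exact Units.ext <| by
    simpa only [Units.val_pow_eq_pow_val, Units.val_one] using
      Matrix.pow_char_eq_one_of_pow_char_pow_eq_one (Fintype.card_fin p).le hApk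
end

section
/- Let p be an odd prime, m, n ≥ 1, and λ a unit of ZMod (p^m) with λ^(p^n) = 1, and let G = G(λ,m,n). Then for every natural number r, the set of p^r-th powers {g^(p^r) : g ∈ G} equals the set of elements (a,x) of G such that p^r divides a in ZMod (p^m) and p^r divides x in ZMod (p^n). -/
/-- The homomorphism `ZMod (p^n) → (ZMod (p^m))ˣ` sending (the class of) `x` to `λ^x`,
well-defined since `λ^(p^n) = 1`. -/
def zmodUnitHom (p m n : ℕ) (lam : (ZMod (p^m))ˣ) (h : lam ^ (p^n) = 1) :
    Multiplicative (ZMod (p^n)) →* (ZMod (p^m))ˣ :=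
  AddMonoidHom.toMultiplicativeLeft
    (ZMod.lift (p^n) ⟨(zmultiplesHom (Additive (ZMod (p^m))ˣ)) (Additive.ofMul lam), by
      show ((p^n : ℕ) : ℤ) • Additive.ofMul lam = 0
      rw [← ofMul_zpow, zpow_natCast, h]
      rfl⟩)

/-- Additive automorphisms of `R` as multiplicative automorphisms of `Multiplicative R`. -/
def addAutToMulAut (R : Type*) [AddZeroClass R] : Multiplicative (AddAut R) →* MulAut (Multiplicative R) where
  toFun e := AddEquiv.toMultiplicative (Multiplicative.toAdd e)
  map_one' := rfl
  map_mul' _ _ := rfl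

/-- The action of `ZMod (p^n)` on `ZMod (p^m)` where `x` acts by multiplication by `λ^x`. -/
def beauvilleAut (p m n : ℕ) (lam : (ZMod (p^m))ˣ) (h : lam ^ (p^n) = 1) :
    Multiplicative (ZMod (p^n)) →* MulAut (Multiplicative (ZMod (p^m))) :=
  ((addAutToMulAut (ZMod (p^m))).comp AddAut.mulLeft).comp (zmodUnitHom p m n lam h)

/-- The semidirect product `G(λ,m,n) = ZMod (p^m) ⋊_λ ZMod (p^n)`. -/
abbrev BeauvilleGroup (p m n : ℕ) (lam : (ZMod (p^m))ˣ) (h : lam ^ (p^n) = 1) :=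
  SemidirectProduct (Multiplicative (ZMod (p^m))) (Multiplicative (ZMod (p^n)))
    (beauvilleAut p m n lam h)

/-!
Write `g = (a, x)` and `μ = λ^x`. Then `g ^ k = ((1 + μ + ⋯ + μ^(k-1)) a, k x)`, and `μ`, being a
unit of `p`-power order, is `≡ 1 (mod p)`. For such `μ` and odd `p` the geometric sum of length
`p^r` is `p^r` times a unit: for `r = 1` this is `1 + μ + ⋯ + μ^(p-1) ≡ p (mod p²)`, and a sum of
length `p^(r+1)` factors as a sum of length `p` in `μ^(p^r)` times one of length `p^r` in `μ`.
Hence `g ↦ g ^ (p^r)` multiplies `a` by `p^r` times a unit depending only on `x`, and `x` by `p^r`.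
-/

open Finset

section GeomSum

variable {R : Type*}

theorem geom_sum_range_mul [CommSemiring R] (u : R) (a b : ℕ) :
    ∑ i ∈ range (a * b), u ^ i = (∑ j ∈ range b, (u ^ a) ^ j) * ∑ i ∈ range a, u ^ i := by
  induction b with
  | zero => simp
  | succ b ih =>
    rw [Nat.mul_succ, sum_range_add, ih, sum_range_succ, add_mul, ← pow_mul,
      mul_sum _ _ (u ^ (a * b))]
    simp only [pow_add]

variable [CommRing R] {p : ℕ}

theorem associated_natCast_geom_sum (hp : Odd p) (hnil : IsNilpotent (p : R)) {u : R}
    (hu : (p : R) ∣ u - 1) : Associated (p : R) (∑ i ∈ range p, u ^ i) := by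
  obtain ⟨b, hb⟩ := hu
  obtain ⟨c, hc⟩ := odd_sq_dvd_geom_sum₂_sub 1 b hp
  simp only [one_pow, mul_one, ← hb, add_sub_cancel] at hc
  have hsum : ∑ i ∈ range p, u ^ i = p * (1 + p * c) := by linear_combination hc
  rw [hsum]
  exact associated_mul_unit_right _ _
    ((Commute.all _ _).isNilpotent_mul_right hnil).isUnit_one_add

theorem associated_natCast_pow_geom_sum (hp : Odd p) (hnil : IsNilpotent (p : R)) {u : R}
    (hu : (p : R) ∣ u - 1) (r : ℕ) :
    Associated ((p : R) ^ r) (∑ i ∈ range (p ^ r), u ^ i) := by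
  induction r with
  | zero => simp
  | succ r ih =>
    have hu' : (p : R) ∣ u ^ p ^ r - 1 := hu.trans (sub_one_dvd_pow_sub_one u _)
    rw [pow_succ, pow_succ, geom_sum_range_mul, mul_comm]
    exact (associated_natCast_geom_sum hp hnil hu').mul_mul ih

end GeomSum

namespace ZMod

theorem natCast_dvd_of_castHom_eq_zero {d n : ℕ} [NeZero n] (hdn : d ∣ n) {c : ZMod n}
    (hc : castHom hdn (ZMod d) c = 0) : (d : ZMod n) ∣ c := by
  rw [castHom_apply, ← natCast_val, natCast_eq_zero_iff] at hc
  obtain ⟨s, hs⟩ := hc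
  rw [← natCast_zmod_val c, hs, Nat.cast_mul]
  exact dvd_mul_right _ _

theorem natCast_dvd_sub_one_of_pow_eq_one {p m e : ℕ} [Fact p.Prime] (hm : m ≠ 0)
    {u : ZMod (p ^ m)} (hu : u ^ p ^ e = 1) : (p : ZMod (p ^ m)) ∣ u - 1 := by
  apply natCast_dvd_of_castHom_eq_zero (dvd_pow_self p hm)
  have hred := congrArg (castHom (dvd_pow_self p hm) (ZMod p)) hu
  rw [map_pow, pow_card_pow, map_one] at hred
  rw [map_sub, hred, map_one, sub_self]

theorem isNilpotent_natCast_self_pow (p m : ℕ) : IsNilpotent (p : ZMod (p ^ m)) :=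
  ⟨m, by rw [← Nat.cast_pow, natCast_self]⟩

end ZMod

namespace SemidirectProduct

variable {N G : Type*} [CommGroup N] [Group G] {φ : G →* MulAut N}

theorem right_pow (g : N ⋊[φ] G) (k : ℕ) : (g ^ k).right = g.right ^ k :=
  map_pow (rightHom : N ⋊[φ] G →* G) g k

theorem left_pow (g : N ⋊[φ] G) (k : ℕ) :
    (g ^ k).left = ∏ i ∈ range k, φ (g.right ^ i) g.left := by
  induction k with
  | zero => simp
  | succ k ih => rw [pow_succ, mul_left, ih, prod_range_succ, right_pow]

end SemidirectProduct

namespace BeauvilleGroup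

variable {p m n : ℕ} {lam : (ZMod (p ^ m))ˣ} {h : lam ^ (p ^ n) = 1}

theorem zmodUnitHom_pow_eq_one (x : Multiplicative (ZMod (p ^ n))) :
    zmodUnitHom p m n lam h x ^ p ^ n = 1 := by
  rw [← map_pow, ← ofAdd_toAdd x, ← ofAdd_nsmul, nsmul_eq_mul, ZMod.natCast_self,
    zero_mul, ofAdd_zero, map_one]

theorem natCast_dvd_zmodUnitHom_sub_one [Fact p.Prime] (hm : m ≠ 0)
    (x : Multiplicative (ZMod (p ^ n))) :
    (p : ZMod (p ^ m)) ∣ (zmodUnitHom p m n lam h x : ZMod (p ^ m)) - 1 :=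
  ZMod.natCast_dvd_sub_one_of_pow_eq_one hm <| by
    rw [← Units.val_pow_eq_pow_val, zmodUnitHom_pow_eq_one, Units.val_one]

theorem toAdd_left_pow (g : BeauvilleGroup p m n lam h) (k : ℕ) :
    Multiplicative.toAdd (g ^ k).left =
      (∑ i ∈ range k, ((zmodUnitHom p m n lam h g.right : (ZMod (p ^ m))ˣ) : ZMod (p ^ m)) ^ i) *
        Multiplicative.toAdd g.left := by
  rw [SemidirectProduct.left_pow, toAdd_prod, sum_mul]
  refine sum_congr rfl fun i _ => ?_
  rw [← Units.val_pow_eq_pow_val, ← map_pow]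
  rfl

theorem toAdd_right_pow (g : BeauvilleGroup p m n lam h) (k : ℕ) :
    Multiplicative.toAdd (g ^ k).right = k * Multiplicative.toAdd g.right := by
  rw [SemidirectProduct.right_pow, toAdd_pow, nsmul_eq_mul]

end BeauvilleGroup

theorem pPow_powers_eq_divisible_set_general
    (p m n : ℕ) (hp : p.Prime) (hodd : Odd p) (hm : 1 ≤ m)
    (lam : (ZMod (p ^ m))ˣ) (h : lam ^ (p ^ n) = 1) (r : ℕ) :
    {g : BeauvilleGroup p m n lam h | ∃ g₀ : BeauvilleGroup p m n lam h, g₀ ^ (p ^ r) = g} =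
      {g : BeauvilleGroup p m n lam h |
        (∃ b : ZMod (p ^ m), Multiplicative.toAdd g.left = (p : ZMod (p ^ m)) ^ r * b) ∧
        (∃ c : ZMod (p ^ n), Multiplicative.toAdd g.right = (p : ZMod (p ^ n)) ^ r * c)} := by
  have : Fact p.Prime := ⟨hp⟩
  have hsum (x : Multiplicative (ZMod (p ^ n))) : Associated ((p : ZMod (p ^ m)) ^ r)
      (∑ i ∈ range (p ^ r), (zmodUnitHom p m n lam h x : ZMod (p ^ m)) ^ i) :=
    associated_natCast_pow_geom_sum hodd (ZMod.isNilpotent_natCast_self_pow p m)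
      (BeauvilleGroup.natCast_dvd_zmodUnitHom_sub_one (h := h) (by omega) x) r
  -- both conditions are `(p : ZMod _) ^ r ∣ _`, unfolded
  ext g
  constructor
  · rintro ⟨g₀, rfl⟩
    refine ⟨?_, Multiplicative.toAdd g₀.right, ?_⟩
    · rw [BeauvilleGroup.toAdd_left_pow]
      exact (hsum _).dvd.mul_right _
    · rw [BeauvilleGroup.toAdd_right_pow, Nat.cast_pow]
  · rintro ⟨hleft, c, hc⟩
    obtain ⟨b, hb⟩ := (hsum (.ofAdd c)).dvd_iff_dvd_left.mp hleft
    refine ⟨⟨.ofAdd b, .ofAdd c⟩, SemidirectProduct.ext ?_ ?_⟩ <;>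
      apply Multiplicative.toAdd.injective
    · rw [BeauvilleGroup.toAdd_left_pow]
      exact hb.symm
    · rw [BeauvilleGroup.toAdd_right_pow, hc, Nat.cast_pow]
      rfl

/-- In `G(λ,m,n)` for odd `p`, the set of `p^r`-th powers is exactly the set of
pairs `(a,x)` with `p^r ∣ a` and `p^r ∣ x`. -/
theorem pPow_powers_eq_divisible_set
    (p m n : ℕ) (hp : p.Prime) (hodd : Odd p) (hm : 1 ≤ m) (hn : 1 ≤ n)
    (lam : (ZMod (p ^ m))ˣ) (h : lam ^ (p ^ n) = 1) (r : ℕ) :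
    {g : BeauvilleGroup p m n lam h | ∃ g₀ : BeauvilleGroup p m n lam h, g₀ ^ (p ^ r) = g} =
      {g : BeauvilleGroup p m n lam h |
        (∃ b : ZMod (p ^ m), Multiplicative.toAdd g.left = (p : ZMod (p ^ m)) ^ r * b) ∧
        (∃ c : ZMod (p ^ n), Multiplicative.toAdd g.right = (p : ZMod (p ^ n)) ^ r * c)} :=
  pPow_powers_eq_divisible_set_general p m n hp hodd hm lam h r
end
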